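/- Under the standing hypotheses, if J_g ≠ {0} for each g ∈ G, then the Galois map θ : H ↦ R^{β_H}, from the set of wide subgroupoids of G to the set of subalgebras of R containing R^β, is injective. -/

import Mathlib

open scoped BigOperators

attribute [local instance] Classical.propDecidable

universe u v w

/-- A groupoid in the sense of Lawson: a (nonempty) set `G` with a partially defined
binary operation (here totalized: `mul g h` is only meaningful when `d g = r h`),
inverses, and one-sided identities `r g = g * g⁻¹` and `d g = g⁻¹ * g`. -/
structure Gpd (G : Type*) where
  d : G → G
  r : G → G
  mul : G → G → G
  inv : G → G
  assoc : ∀ g h l, d g = r h → d h = r l → mul (mul g h) l = mul g (mul h l)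
  d_mul : ∀ g h, d g = r h → d (mul g h) = d h
  r_mul : ∀ g h, d g = r h → r (mul g h) = r g
  d_inv : ∀ g, d (inv g) = r g
  r_inv : ∀ g, r (inv g) = d g
  inv_inv : ∀ g, inv (inv g) = g
  mul_inv : ∀ g, mul g (inv g) = r g
  inv_mul : ∀ g, mul (inv g) g = d g
  mul_d : ∀ g, mul g (d g) = g
  r_mul_self : ∀ g, mul (r g) g = g
  d_d : ∀ g, d (d g) = d g
  r_d : ∀ g, r (d g) = d g
  inv_d : ∀ g, inv (d g) = d g

namespace Gpd

variable {G : Type*} (gpd : Gpd G)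

/-- The set `G₀` of identities of the groupoid. -/
def idts : Set G := Set.range gpd.d

/-- `H` is a subgroupoid: a nonempty subset closed under inverses and under all
defined products. -/
def IsSubgpd (H : Set G) : Prop :=
  H.Nonempty ∧ (∀ g ∈ H, gpd.inv g ∈ H) ∧
    ∀ g ∈ H, ∀ h ∈ H, gpd.d g = gpd.r h → gpd.mul g h ∈ H

/-- A wide subgroupoid: a subgroupoid containing all the identities of `G`. -/
def IsWide (H : Set G) : Prop := gpd.IsSubgpd H ∧ gpd.idts ⊆ H

/-- The subgroupoid generated by a subset `X` of `G`: the intersection of all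
subgroupoids containing `X`. -/
def gen (X : Set G) : Set G := ⋂₀ {H : Set G | gpd.IsSubgpd H ∧ X ⊆ H}

end Gpd

/-- A unital action `β` of a groupoid `gpd` on a `K`-algebra `R`.  Each ideal
`E_g = E_{r g}` is the unital ideal `R·(one g)` generated by the central idempotent
`one g` (the identity element `1_g` of `E_g`), and `act g` encodes the `K`-algebra
isomorphism `β_g : E_{g⁻¹} → E_g` (only the values `act g (x * one (inv g))` on
`E_{g⁻¹}` are relevant). -/
structure GpdAct (K : Type*) [CommRing K] (R : Type*) [Ring R] [Algebra K R]
    {G : Type*} (gpd : Gpd G) where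
  one : G → R
  one_central : ∀ g x, one g * x = x * one g
  one_idem : ∀ g, one g * one g = one g
  one_r : ∀ g, one g = one (gpd.r g)
  act : G → R → R
  act_mem : ∀ g x, act g (x * one (gpd.inv g)) * one g = act g (x * one (gpd.inv g))
  act_add : ∀ g x y, act g ((x + y) * one (gpd.inv g)) =
      act g (x * one (gpd.inv g)) + act g (y * one (gpd.inv g))
  act_mul : ∀ g x y, act g (x * y * one (gpd.inv g)) =
      act g (x * one (gpd.inv g)) * act g (y * one (gpd.inv g))
  act_smul : ∀ g (k : K) (x : R),
      act g (k • x * one (gpd.inv g)) = k • act g (x * one (gpd.inv g))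
  act_unit : ∀ g, act g (one (gpd.inv g)) = one g
  act_id : ∀ g x, act (gpd.d g) (x * one (gpd.d g)) = x * one (gpd.d g)
  act_comp : ∀ g h x, gpd.d g = gpd.r h →
      act g (act h (x * one (gpd.inv h)) * one (gpd.inv g)) =
        act (gpd.mul g h) (x * one (gpd.inv h))

section Defs

variable {K : Type*} [CommRing K] {R : Type*} [Ring R] [Algebra K R]
  {G : Type*} (gpd : Gpd G) (β : GpdAct K R gpd)

/-- The invariants `R^{β_H}` of `R` under the restriction of the action to a
subset `H` of `G`: all `x` with `β_h(x 1_{h⁻¹}) = x 1_h` for all `h ∈ H`. -/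
def fixedSet (H : Set G) : Set R :=
  {x : R | ∀ h ∈ H, β.act h (x * β.one (gpd.inv h)) = x * β.one h}

/-- `J_g = {t ∈ E_g | t β_g(x 1_{g⁻¹}) = x t for all x ∈ R}`. -/
def Jset (g : G) : Set R :=
  {t : R | t * β.one g = t ∧ ∀ x : R, t * β.act g (x * β.one (gpd.inv g)) = x * t}

/-- `H_S = {g ∈ G | β_g(s 1_{g⁻¹}) = s 1_g for all s ∈ S}`. -/
def Hset (S : Set R) : Set G :=
  {g : G | ∀ s ∈ S, β.act g (s * β.one (gpd.inv g)) = s * β.one g}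

/-- `R = ⊕_{e ∈ G₀} E_e`, i.e. the identity elements of the ideals `E_e`, `e ∈ G₀`,
are pairwise orthogonal central idempotents summing to `1`. -/
def IsDecomp [Fintype G] : Prop :=
  (∑ e : G, if e ∈ gpd.idts then β.one e else 0) = 1 ∧
    ∀ e f : G, e ∈ gpd.idts → f ∈ gpd.idts → e ≠ f → β.one e * β.one f = 0

/-- `R` is a `β`-Galois extension of `R^β`: there is a Galois coordinate system
`x_i, y_i` with `Σ_i x_i β_g(y_i 1_{g⁻¹}) = δ_{e,g} 1_e` for all `e ∈ G₀`, `g ∈ G`. -/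
def IsGaloisExt [Fintype G] : Prop :=
  ∃ (n : ℕ) (x y : Fin n → R), ∀ g : G,
    (∑ i, x i * β.act g (y i * β.one (gpd.inv g))) = if g ∈ gpd.idts then β.one g else 0

/-- `V = ⊕_{g ∈ H} J_g`: every family `(f g)_{g ∈ H}` with `f g ∈ J_g` sums into `V`,
and every element of `V` is in a unique way such a sum (internal direct sum). -/
def IsDirectSumOver [Fintype G] (H : Set G) (V : Set R) : Prop :=
  (∀ f : G → R, (∀ g, f g ∈ Jset gpd β g) → (∀ g, g ∉ H → f g = 0) → (∑ g, f g) ∈ V) ∧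
    ∀ v ∈ V, ∃! f : G → R,
      (∀ g, f g ∈ Jset gpd β g) ∧ (∀ g, g ∉ H → f g = 0) ∧ v = ∑ g, f g

/-- `γ(H) = ⊕_{h ∈ H} J_h`, as the set of all sums `Σ_{h ∈ H} j_h`, `j_h ∈ J_h`. -/
def gammaSet [Fintype G] (H : Set G) : Set R :=
  {v : R | ∃ f : G → R,
    (∀ g, f g ∈ Jset gpd β g) ∧ (∀ g, g ∉ H → f g = 0) ∧ v = ∑ g, f g}

/-- The product `J_h J_g`: all finite sums of products `a b` with `a ∈ J_h`, `b ∈ J_g`. -/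
def JprodSet (h g : G) : Set R :=
  {z : R | ∃ (n : ℕ) (a b : Fin n → R),
    (∀ i, a i ∈ Jset gpd β h) ∧ (∀ i, b i ∈ Jset gpd β g) ∧ z = ∑ i, a i * b i}

end Defs

section Sep

variable {R : Type u} [Ring R]

/-- A biadditive pairing `φ : R × R → N` is `S`-balanced if `φ(u s, v) = φ(u, s v)`
for all `s ∈ S`.  Such pairings are exactly the additive maps out of `R ⊗_S R`,
so they detect equality in `R ⊗_S R`. -/
def IsBalanced (S : Set R) {N : Type v} [AddCommGroup N] (φ : R →+ R →+ N) : Prop :=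
  ∀ u v s : R, s ∈ S → φ (u * s) v = φ u (s * v)

/-- `R` is a separable extension of the subring `S ⊆ R`: there is
`z = Σ_i x_i ⊗ y_i ∈ R ⊗_S R` with `Σ_i x_i y_i = 1` and `a z = z a` for all `a ∈ R`
(the latter expressed via all `S`-balanced pairings, which detect equality in
`R ⊗_S R`). -/
def RSepOver (S : Set R) : Prop :=
  ∃ (n : ℕ) (x y : Fin n → R), (∑ i, x i * y i) = 1 ∧
    ∀ (N : Type v) [AddCommGroup N] (φ : R →+ R →+ N), IsBalanced S φ →
      ∀ a : R, (∑ i, φ (a * x i) (y i)) = ∑ i, φ (x i) (y i * a)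

/-- `R` is a Hirata separable extension of `S`: `R ⊗_S R` is isomorphic as an
`R`-bimodule to a direct summand of a finite direct sum of copies of `R`.
Equivalently (Casimir elements): there are `R`-central elements
`e_k = Σ_i x_{k,i} ⊗ y_{k,i} ∈ (R ⊗_S R)^R` and `a_k ∈ V_R(S)` with
`Σ_k a_k e_k = 1 ⊗ 1` (centrality and the last equation expressed via all
`S`-balanced pairings, which detect equality in `R ⊗_S R`). -/
def HirataSep (S : Set R) : Prop :=
  ∃ (n m : ℕ) (x y : Fin n → Fin m → R) (a : Fin n → R),
    (∀ k, a k ∈ Set.centralizer S) ∧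
    ∀ (N : Type v) [AddCommGroup N] (φ : R →+ R →+ N), IsBalanced S φ →
      (∀ (k : Fin n) (r : R),
        (∑ i, φ (r * x k i) (y k i)) = ∑ i, φ (x k i) (y k i * r)) ∧
      (∑ k, ∑ i, φ (a k * x k i) (y k i)) = φ 1 1

/-- The subring `A` of `R` is a separable extension of the subring `S ⊆ A`:
there is `z = Σ_i x_i ⊗ y_i ∈ A ⊗_S A` with `Σ_i x_i y_i = 1` and `a z = z a`
for all `a ∈ A`. -/
def SubSepOver (A : Subring R) (S : Set R) : Prop :=
  ∃ (n : ℕ) (x y : Fin n → A), (∑ i, (x i : R) * (y i : R)) = 1 ∧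
    ∀ (N : Type v) [AddCommGroup N] (φ : A →+ A →+ N),
      (∀ u v s : A, (s : R) ∈ S → φ (u * s) v = φ u (s * v)) →
      ∀ a : A, (∑ i, φ (a * x i) (y i)) = ∑ i, φ (x i) (y i * a)

end Sep

/-- `R` satisfies the fundamental theorem: the Galois map `θ : H ↦ R^{β_H}` is a
bijection from the set of wide subgroupoids of `G` onto the set of subalgebras of
`R` which are separable over `R^β`. -/
def SatisfiesFT {K : Type*} [CommRing K] {R : Type u} [Ring R] [Algebra K R]
    {G : Type*} [Fintype G] (gpd : Gpd G) (β : GpdAct K R gpd) : Prop :=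
  (∀ H : Set G, gpd.IsWide H → ∃ A : Subring R, (A : Set R) = fixedSet gpd β H ∧
      fixedSet gpd β Set.univ ⊆ (A : Set R) ∧
      SubSepOver.{u, v} A (fixedSet gpd β Set.univ)) ∧
  (∀ H L : Set G, gpd.IsWide H → gpd.IsWide L →
      fixedSet gpd β H = fixedSet gpd β L → H = L) ∧
  (∀ A : Subring R, fixedSet gpd β Set.univ ⊆ (A : Set R) →
      SubSepOver.{u, v} A (fixedSet gpd β Set.univ) →
      ∃ H : Set G, gpd.IsWide H ∧ fixedSet gpd β H = (A : Set R))

/-! If `g ∈ H \ L` and `R^{β_L} = R^{β_H}`, every trace `tr_L(u) = Σ_{l ∈ L} β_l(u 1_{l⁻¹})`,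
which is `L`-invariant, is also fixed by `g`. For a Galois coordinate system `(x_i, y_i)`,
evaluate `Σ_i x_i β_g(tr_L(y_i t) 1_{g⁻¹})` in two ways. Since `g` fixes the traces, it equals
`(Σ_i x_i tr_L(y_i t)) 1_g = t 1_g`. Expanding `β_g ∘ β_l = β_{gl}` instead, it is `0`, because
the only `l` with `gl ∈ G₀` is `g⁻¹ ∉ L`. Taking `t = 1_g` gives `1_g = 0`, hence `J_g = 0`. -/

namespace Gpd

variable {G : Type*} (gpd : Gpd G)

lemma d_mem_idts (g : G) : gpd.d g ∈ gpd.idts := ⟨g, rfl⟩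

lemma r_mem_idts (g : G) : gpd.r g ∈ gpd.idts := ⟨gpd.inv g, gpd.d_inv g⟩

lemma r_eq_self_of_mem_idts {e : G} (he : e ∈ gpd.idts) : gpd.r e = e := by
  obtain ⟨m, rfl⟩ := he
  exact gpd.r_d m

lemma eq_inv_of_mul_mem_idts {g l : G} (hgl : gpd.d g = gpd.r l)
    (hmem : gpd.mul g l ∈ gpd.idts) : l = gpd.inv g := by
  have hidt : gpd.mul g l = gpd.d (gpd.inv g) := by
    rw [gpd.d_inv, ← gpd.r_mul g l hgl, gpd.r_eq_self_of_mem_idts hmem]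
  calc l = gpd.mul (gpd.mul (gpd.inv g) g) l := by rw [gpd.inv_mul, hgl, gpd.r_mul_self]
    _ = gpd.mul (gpd.inv g) (gpd.mul g l) := gpd.assoc _ g l (gpd.d_inv g) hgl
    _ = gpd.inv g := by rw [hidt, gpd.mul_d]

end Gpd

namespace GpdAct

variable {K : Type*} [CommRing K] {R : Type*} [Ring R] [Algebra K R]
  {G : Type*} {gpd : Gpd G} (β : GpdAct K R gpd)

lemma one_inv (g : G) : β.one (gpd.inv g) = β.one (gpd.d g) := by
  rw [β.one_r (gpd.inv g), gpd.r_inv]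

def actHom (g : G) : R →+ R :=
  AddMonoidHom.mk' (fun x => β.act g (x * β.one (gpd.inv g))) (β.act_add g)

lemma act_sum {ι : Type*} (g : G) (s : Finset ι) (f : ι → R) :
    β.act g ((∑ i ∈ s, f i) * β.one (gpd.inv g)) =
      ∑ i ∈ s, β.act g (f i * β.one (gpd.inv g)) :=
  map_sum (β.actHom g) f s

lemma act_mul_one_eq_zero [Fintype G] (hdec : IsDecomp gpd β) (l : G) (x : R) {e : G}
    (he : e ∈ gpd.idts) (hne : gpd.r l ≠ e) :
    β.act l (x * β.one (gpd.inv l)) * β.one e = 0 := by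
  rw [← β.act_mem l x, mul_assoc, β.one_r l,
    hdec.2 _ _ (gpd.r_mem_idts l) he hne, mul_zero]

lemma act_mul_one_r (l : G) (x : R) :
    β.act l (x * β.one (gpd.inv l)) * β.one (gpd.r l) = β.act l (x * β.one (gpd.inv l)) := by
  rw [← β.one_r, β.act_mem]

end GpdAct

section Trace

variable {K : Type*} [CommRing K] {R : Type*} [Ring R] [Algebra K R]
  {G : Type*} [Fintype G] (gpd : Gpd G) (β : GpdAct K R gpd)

noncomputable def trace (L : Set G) (x : R) : R :=
  ∑ l with l ∈ L, β.act l (x * β.one (gpd.inv l))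

variable {gpd β}

lemma trace_mul_one (hdec : IsDecomp gpd β) (L : Set G) (x : R) {e : G}
    (he : e ∈ gpd.idts) :
    trace gpd β L x * β.one e =
      ∑ l with l ∈ L ∧ gpd.r l = e, β.act l (x * β.one (gpd.inv l)) := by
  rw [trace, Finset.sum_mul, Finset.sum_filter, Finset.sum_filter]
  refine Finset.sum_congr rfl fun l _ => ?_
  by_cases hl : l ∈ L
  · by_cases hr : gpd.r l = e
    · rw [if_pos hl, if_pos ⟨hl, hr⟩, ← hr, β.act_mul_one_r]
    · rw [if_pos hl, if_neg (by tauto), β.act_mul_one_eq_zero hdec l x he hr]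
  · rw [if_neg hl, if_neg (by tauto)]

lemma act_trace (hdec : IsDecomp gpd β) (L : Set G) (g : G) (u : R) :
    β.act g (trace gpd β L u * β.one (gpd.inv g)) =
      ∑ l with l ∈ L ∧ gpd.r l = gpd.d g,
        β.act (gpd.mul g l) (u * β.one (gpd.inv (gpd.mul g l))) := by
  have hsum : trace gpd β L u * β.one (gpd.inv g) =
      (∑ l with l ∈ L ∧ gpd.r l = gpd.d g, β.act l (u * β.one (gpd.inv l))) *
        β.one (gpd.inv g) := by
    rw [β.one_inv g, ← trace_mul_one hdec L u (gpd.d_mem_idts g), mul_assoc, β.one_idem]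
  rw [hsum, β.act_sum]
  refine Finset.sum_congr rfl fun l hl => ?_
  obtain ⟨-, hr⟩ := (Finset.mem_filter.mp hl).2
  rw [β.act_comp g l u hr.symm, β.one_inv l, β.one_inv (gpd.mul g l), gpd.d_mul g l hr.symm]

lemma trace_mem_fixedSet (hdec : IsDecomp gpd β) {L : Set G} (hL : gpd.IsWide L) (x : R) :
    trace gpd β L x ∈ fixedSet gpd β L := by
  intro h hh
  have hinv : gpd.inv h ∈ L := hL.1.2.1 h hh
  rw [act_trace hdec, β.one_r h, trace_mul_one hdec L x (gpd.r_mem_idts h)]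
  -- left translation `l ↦ h l` maps `{l ∈ L | r l = d h}` onto `{m ∈ L | r m = r h}`
  refine Finset.sum_bij' (fun l _ => gpd.mul h l) (fun m _ => gpd.mul (gpd.inv h) m)
    ?_ ?_ ?_ ?_ fun _ _ => rfl
  · simp only [Finset.mem_filter, Finset.mem_univ, true_and]
    rintro l ⟨hlL, hrl⟩
    exact ⟨hL.1.2.2 h hh l hlL hrl.symm, gpd.r_mul h l hrl.symm⟩
  · simp only [Finset.mem_filter, Finset.mem_univ, true_and]
    rintro m ⟨hmL, hrm⟩
    have hd : gpd.d (gpd.inv h) = gpd.r m := by rw [gpd.d_inv, hrm]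
    exact ⟨hL.1.2.2 _ hinv m hmL hd, by rw [gpd.r_mul _ m hd, gpd.r_inv]⟩
  · simp only [Finset.mem_filter, Finset.mem_univ, true_and]
    rintro l ⟨-, hrl⟩
    rw [← gpd.assoc _ h l (gpd.d_inv h) hrl.symm, gpd.inv_mul, ← hrl, gpd.r_mul_self]
  · simp only [Finset.mem_filter, Finset.mem_univ, true_and]
    rintro m ⟨-, hrm⟩
    have hd : gpd.d (gpd.inv h) = gpd.r m := by rw [gpd.d_inv, hrm]
    rw [← gpd.assoc h _ m (gpd.r_inv h).symm hd, gpd.mul_inv, ← hrm, gpd.r_mul_self]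

end Trace

section GaloisCoordinates

variable {K : Type*} [CommRing K] {R : Type*} [Ring R] [Algebra K R]
  {G : Type*} {gpd : Gpd G} {β : GpdAct K R gpd} {n : ℕ} {x y : Fin n → R}

lemma sum_mul_act_mul
    (hxy : ∀ g, ∑ i, x i * β.act g (y i * β.one (gpd.inv g)) =
      if g ∈ gpd.idts then β.one g else 0) (m : G) (t : R) :
    ∑ i, x i * β.act m (y i * t * β.one (gpd.inv m)) =
      (if m ∈ gpd.idts then β.one m else 0) * β.act m (t * β.one (gpd.inv m)) := by
  simp only [β.act_mul, ← mul_assoc, ← Finset.sum_mul, hxy]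

lemma sum_mul_trace [Fintype G] (hdec : IsDecomp gpd β)
    (hxy : ∀ g, ∑ i, x i * β.act g (y i * β.one (gpd.inv g)) =
      if g ∈ gpd.idts then β.one g else 0)
    {L : Set G} (hL : gpd.idts ⊆ L) (t : R) :
    ∑ i, x i * trace gpd β L (y i * t) = t := by
  have hterm : ∀ l ∈ Finset.univ.filter (· ∈ L),
      ∑ i, x i * β.act l (y i * t * β.one (gpd.inv l)) =
        if l ∈ gpd.idts then t * β.one l else 0 := by
    intro l _
    rw [sum_mul_act_mul hxy]
    split_ifs with hl
    · obtain ⟨m, rfl⟩ := hl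
      rw [gpd.inv_d, β.act_id, ← mul_assoc, β.one_central, mul_assoc, β.one_idem]
    · exact zero_mul _
  calc ∑ i, x i * trace gpd β L (y i * t)
      = ∑ l with l ∈ L, ∑ i, x i * β.act l (y i * t * β.one (gpd.inv l)) := by
        simp only [trace, Finset.mul_sum]
        exact Finset.sum_comm
    _ = ∑ l with l ∈ L, if l ∈ gpd.idts then t * β.one l else 0 := Finset.sum_congr rfl hterm
    _ = t * ∑ e : G, if e ∈ gpd.idts then β.one e else 0 := by
        rw [Finset.sum_filter_of_ne fun l _ h => hL (by_contra fun hl => h (if_neg hl)),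
          Finset.mul_sum]
        exact Finset.sum_congr rfl fun l _ => by split_ifs <;> simp
    _ = t := by rw [hdec.1, mul_one]

lemma sum_mul_act_trace_eq_zero [Fintype G] (hdec : IsDecomp gpd β)
    (hxy : ∀ g, ∑ i, x i * β.act g (y i * β.one (gpd.inv g)) =
      if g ∈ gpd.idts then β.one g else 0)
    {L : Set G} (hLinv : ∀ l ∈ L, gpd.inv l ∈ L) {g : G} (hg : g ∉ L) (t : R) :
    ∑ i, x i * β.act g (trace gpd β L (y i * t) * β.one (gpd.inv g)) = 0 := by
  simp only [act_trace hdec, Finset.mul_sum]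
  rw [Finset.sum_comm]
  refine Finset.sum_eq_zero fun l hl => ?_
  obtain ⟨hlL, hrl⟩ := (Finset.mem_filter.mp hl).2
  have hni : gpd.mul g l ∉ gpd.idts := fun hmem => by
    have := hLinv l hlL
    rw [gpd.eq_inv_of_mul_mem_idts hrl.symm hmem, gpd.inv_inv] at this
    exact hg this
  rw [sum_mul_act_mul hxy, if_neg hni, zero_mul]

end GaloisCoordinates

section Injectivity

variable {K : Type*} [CommRing K] {R : Type*} [Ring R] [Algebra K R]
  {G : Type*} {gpd : Gpd G} {β : GpdAct K R gpd}

lemma one_eq_zero_of_fixedSet_subset [Fintype G] (hdec : IsDecomp gpd β) (hgal : IsGaloisExt gpd β)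
    {H L : Set G} (hL : gpd.IsWide L) (hfix : fixedSet gpd β L ⊆ fixedSet gpd β H)
    {g : G} (hgH : g ∈ H) (hgL : g ∉ L) : β.one g = 0 := by
  obtain ⟨n, x, y, hxy⟩ := hgal
  have hfixed : ∀ u, β.act g (trace gpd β L u * β.one (gpd.inv g)) =
      trace gpd β L u * β.one g := fun u =>
    hfix (trace_mem_fixedSet hdec hL u) g hgH
  calc β.one g = (∑ i, x i * trace gpd β L (y i * β.one g)) * β.one g := by
        rw [sum_mul_trace hdec hxy hL.2, β.one_idem]
    _ = ∑ i, x i * β.act g (trace gpd β L (y i * β.one g) * β.one (gpd.inv g)) := by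
        simp only [hfixed, Finset.sum_mul, mul_assoc]
    _ = 0 := sum_mul_act_trace_eq_zero hdec hxy hL.1.2.1 hgL _

lemma Jset_eq_zero_of_one_eq_zero {g : G} (hg : β.one g = 0) : Jset gpd β g = {0} := by
  ext t
  refine ⟨fun ht => ?_, fun ht => ?_⟩
  · rw [Set.mem_singleton_iff, ← ht.1, hg, mul_zero]
  · rw [Set.mem_singleton_iff.mp ht]
    exact ⟨zero_mul _, fun _ => by rw [zero_mul, mul_zero]⟩

lemma subset_of_fixedSet_subset [Fintype G] (hdec : IsDecomp gpd β) (hgal : IsGaloisExt gpd β)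
    (hJ : ∀ g : G, Jset gpd β g ≠ {0}) {H L : Set G} (hL : gpd.IsWide L)
    (hfix : fixedSet gpd β L ⊆ fixedSet gpd β H) : H ⊆ L := fun g hgH =>
  by_contra fun hgL =>
    hJ g (Jset_eq_zero_of_one_eq_zero (one_eq_zero_of_fixedSet_subset hdec hgal hL hfix hgH hgL))

end Injectivity

theorem theta_injective_of_Jset_ne_zero_general {K : Type*} [CommRing K] {R : Type*} [Ring R]
    [Algebra K R] {G : Type*} [Fintype G]
    (gpd : Gpd G) (β : GpdAct K R gpd)
    (hdec : IsDecomp gpd β) (hgal : IsGaloisExt gpd β)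
    (hJ : ∀ g : G, Jset gpd β g ≠ {0}) :
    ∀ H L : Set G, gpd.IsWide H → gpd.IsWide L →
      fixedSet gpd β H = fixedSet gpd β L → H = L := fun _ _ hH hL hfix =>
  (subset_of_fixedSet_subset hdec hgal hJ hL hfix.ge).antisymm
    (subset_of_fixedSet_subset hdec hgal hJ hH hfix.le)

/-- Theorem 3.3: if `J_g ≠ 0` for each `g ∈ G`, then the Galois map
`θ : H ↦ R^{β_H}` on wide subgroupoids is injective. -/
theorem theta_injective_of_Jset_ne_zero {K : Type*} [CommRing K] {R : Type*} [Ring R]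
    [Algebra K R] {G : Type*} [Fintype G] [Nonempty G]
    (gpd : Gpd G) (β : GpdAct K R gpd)
    (hdec : IsDecomp gpd β) (hgal : IsGaloisExt gpd β)
    (hJ : ∀ g : G, Jset gpd β g ≠ {0}) :
    ∀ H L : Set G, gpd.IsWide H → gpd.IsWide L →
      fixedSet gpd β H = fixedSet gpd β L → H = L :=
  theta_injective_of_Jset_ne_zero_general gpd β hdec hgal hJ
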